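/- arXiv:1902.08791 — 8 statements merged into one kernel-verified Lean document; each statement's English description precedes it below -/
import Mathlib

section
/- Let x be a word over an alphabet with shortest period k ≥ 2, and let y be a contiguous subword of x with |y| ≥ 2k−2. Then k is also the shortest period of y. -/
/-- `x`, viewed as a word of length `n` (positions `0,…,n-1`), is `k`-periodic:
`x[i] = x[i+k]` whenever both indices are valid. -/
def PeriodicOn {α : Type*} (x : ℕ → α) (n k : ℕ) : Prop :=
  ∀ i, i + k < n → x i = x (i + k)

/-- If `k ≥ 2` is the shortest period of the word `x` of length `n`, and `y = x[a:a+m]` is a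
contiguous subword of length `m ≥ 2k-2`, then `k` is the shortest period of `y`. -/
theorem subword_shortest_period {α : Type*} (x : ℕ → α) (n k : ℕ) (hk : 2 ≤ k)
    (hleast : IsLeast {k' | 1 ≤ k' ∧ PeriodicOn x n k'} k)
    (a m : ℕ) (ham : a + m ≤ n) (hm : 2 * k - 2 ≤ m) :
    IsLeast {k' | 1 ≤ k' ∧ PeriodicOn (fun i => x (a + i)) m k'} k := by
  obtain ⟨⟨hk1, hxk⟩, hmin⟩ := hleast
  constructor
  · refine ⟨by omega, fun i hi => ?_⟩
    have h := hxk (a + i) (by omega)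
    simpa [add_assoc] using h
  · rintro k' ⟨hk'1, hyk'⟩
    by_contra hlt
    push_neg at hlt
    -- hlt : k' < k
    -- x is constant on residue classes mod k, within [0, n)
    have hstep : ∀ d i, i + d * k < n → x i = x (i + d * k) := by
      intro d
      induction d with
      | zero => intro i _; simp
      | succ d ih =>
        intro i h
        have h1 : x i = x (i + k) := hxk i (by nlinarith [Nat.succ_mul d k])
        have h2 : x (i + k) = x (i + k + d * k) := ih (i + k) (by nlinarith [Nat.succ_mul d k])
        have h3 : i + k + d * k = i + (d + 1) * k := by ring
        rw [h1, h2, h3]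
    have hmod : ∀ i j, i < n → j < n → i ≡ j [MOD k] → x i = x j := by
      have key : ∀ i j, i ≤ j → j < n → i ≡ j [MOD k] → x i = x j := by
        intro i j hij hj hme
        have hdvd : k ∣ j - i := (Nat.modEq_iff_dvd' hij).mp hme
        obtain ⟨d, hd⟩ := hdvd
        rw [mul_comm] at hd
        have hj' : j = i + d * k := by omega
        rw [hj']
        exact hstep d i (by omega)
      intro i j hi hj hme
      rcases le_total i j with h | h
      · exact key i j h hj hme
      · exact (key j i h hi hme.symm).symm
    -- witnesses: single-step holds for residues other than k-1
    have hP1 : ∀ s, s % k ≠ k - 1 → x (a + s % k) = x (a + (s + k') % k) := by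
      intro s hs
      set r := s % k with hr
      have hrk : r < k := Nat.mod_lt _ (by omega)
      have h1 : x (a + r) = x (a + (r + k')) := hyk' r (by omega)
      have h2 : x (a + (r + k')) = x (a + (s + k') % k) := by
        apply hmod
        · omega
        · have : (s + k') % k < k := Nat.mod_lt _ (by omega)
          omega
        · have c1 : a + (r + k') ≡ a + (s + k') [MOD k] :=
            (((Nat.mod_modEq s k).add_right k').add_left a)
          have c2 : a + (s + k') % k ≡ a + (s + k') [MOD k] :=
            ((Nat.mod_modEq (s + k') k).add_left a)
          exact c1.trans c2.symm
      rw [h1, h2]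
    -- chain argument for residue k-1
    have hP : ∀ s, x (a + s % k) = x (a + (s + k') % k) := by
      intro s
      by_cases hs : s % k ≠ k - 1
      · exact hP1 s hs
      push_neg at hs
      have hex : ∃ t, 0 < t ∧ k ∣ t * k' := ⟨k, by omega, ⟨k', by ring⟩⟩
      set L := Nat.find hex with hLdef
      obtain ⟨hL0, hLdvd⟩ := Nat.find_spec hex
      have hchain : ∀ t, 0 < t → t ≤ L →
          x (a + (k - 1 + k') % k) = x (a + (k - 1 + t * k') % k) := by
        intro t
        induction t with
        | zero => intro h; omega
        | succ t ih =>
          intro _ htL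
          rcases Nat.eq_zero_or_pos t with h0 | ht0
          · subst h0; norm_num
          · have ht : x (a + (k - 1 + k') % k) = x (a + (k - 1 + t * k') % k) :=
              ih ht0 (by omega)
            have hnd : ¬ k ∣ t * k' := fun hd => Nat.find_min hex (by omega) ⟨ht0, hd⟩
            have hne : (k - 1 + t * k') % k ≠ k - 1 := by
              intro h
              apply hnd
              have hme : k - 1 ≡ k - 1 + t * k' [MOD k] := by
                unfold Nat.ModEq
                rw [h, Nat.mod_eq_of_lt (by omega)]
              have := (Nat.modEq_iff_dvd' (Nat.le_add_right _ _)).mp hme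
              simpa using this
            have h3 := hP1 (k - 1 + t * k') hne
            have heq : k - 1 + t * k' + k' = k - 1 + (t + 1) * k' := by ring
            rw [ht, h3, heq]
      have hQ1 : x (a + (k - 1 + k') % k) = x (a + (k - 1 + L * k') % k) :=
        hchain L hL0 le_rfl
      have hQL : (k - 1 + L * k') % k = k - 1 := by
        obtain ⟨c, hc⟩ := hLdvd
        rw [hc, Nat.add_mul_mod_self_left, Nat.mod_eq_of_lt (by omega)]
      rw [hQL] at hQ1
      have e1 : a + s % k = a + (k - 1) := by omega
      have e2 : (s + k') % k = (k - 1 + k') % k := by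
        have hme : s ≡ k - 1 [MOD k] := by
          unfold Nat.ModEq
          rw [hs, Nat.mod_eq_of_lt (by omega)]
        exact hme.add_right k'
      rw [e1, e2, hQ1]
    -- conclude: x is k'-periodic
    have hxk' : PeriodicOn x n k' := by
      intro i hi
      have hak : a + a * (k - 1) = a * k := by
        obtain ⟨c, hc⟩ := Nat.exists_eq_add_of_le hk
        subst hc
        have h1 : 2 + c - 1 = c + 1 := by omega
        rw [h1]; ring
      set s := i + a * (k - 1) with hsdef
      have hsn : a + s % k < n := by
        have : s % k < k := Nat.mod_lt _ (by omega)
        omega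
      have hsn' : a + (s + k') % k < n := by
        have : (s + k') % k < k := Nat.mod_lt _ (by omega)
        omega
      have h1 : x i = x (a + s % k) := by
        apply hmod i _ (by omega) hsn
        have c1 : a + s % k ≡ a + s [MOD k] := (Nat.mod_modEq s k).add_left a
        have c2 : a + s = i + a * k := by omega
        have c3 : (i + a * k) % k = i % k := Nat.add_mul_mod_self_right i a k
        rw [c2] at c1
        exact (c1.trans c3).symm
      have h2 : x (a + (s + k') % k) = x (i + k') := by
        apply hmod _ _ hsn' hi
        have c1 : a + (s + k') % k ≡ a + (s + k') [MOD k] :=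
          (Nat.mod_modEq (s + k') k).add_left a
        have c2 : a + (s + k') = i + k' + a * k := by omega
        have c3 : (i + k' + a * k) % k = (i + k') % k := Nat.add_mul_mod_self_right (i + k') a k
        rw [c2] at c1
        exact c1.trans c3
      rw [h1, hP s, h2]
    have := hmin ⟨hk'1, hxk'⟩
    omega
end

section
/- Let G be a finite strongly connected digraph with algebraic length 1. Then there exists an integer K such that for all vertices v₀, v₁ of G and all k ≥ K, there is a directed walk of length exactly k from v₀ to v₁. -/
/-- There is a directed walk of length `k` from `u` to `v` in the digraph with edge relation `E`. -/
def HasWalk {A : Type*} (E : A → A → Prop) (u v : A) (k : ℕ) : Prop :=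
  ∃ w : ℕ → A, w 0 = u ∧ w k = v ∧ ∀ i < k, E (w i) (w (i + 1))

/-- Every vertex reaches every vertex by a directed walk. -/
def StronglyConnected {A : Type*} (E : A → A → Prop) : Prop :=
  ∀ u v : A, ∃ k, HasWalk E u v k

/-- No homomorphism onto a directed cycle of length `m ≥ 2`. -/
def AlgLengthOne {A : Type*} (E : A → A → Prop) : Prop :=
  ∀ m : ℕ, 2 ≤ m → ¬ ∃ f : A → ZMod m, ∀ u v, E u v → f v = f u + 1

lemma hasWalk_refl {A : Type*} (E : A → A → Prop) (u : A) : HasWalk E u u 0 :=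
  ⟨fun _ => u, rfl, rfl, fun i h => absurd h (Nat.not_lt_zero i)⟩

lemma hasWalk_trans {A : Type*} {E : A → A → Prop} {u v w : A} {p q : ℕ}
    (h1 : HasWalk E u v p) (h2 : HasWalk E v w q) : HasWalk E u w (p + q) := by
  obtain ⟨f, hf0, hfp, hfe⟩ := h1
  obtain ⟨g, hg0, hgq, hge⟩ := h2
  refine ⟨fun i => if i ≤ p then f i else g (i - p), by simp [hf0], ?_, ?_⟩
  · by_cases hq : q = 0
    · subst hq
      have : v = w := by rw [← hg0, hgq]
      simp [hfp, this]
    · have h' : ¬ (p + q ≤ p) := by omega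
      simp [h', hgq]
  · intro i hi
    by_cases h : i + 1 ≤ p
    · have h' : i ≤ p := by omega
      simpa [h, h'] using hfe i (by omega)
    · by_cases h' : i ≤ p
      · have hip : i = p := by omega
        subst hip
        have := hge 0 (by omega)
        have e1 : i + 1 - i = 1 := by omega
        simpa [h, h', hg0, hfp, e1] using this
      · have := hge (i - p) (by omega)
        have e1 : i + 1 - p = (i - p) + 1 := by omega
        simpa [h, h', e1] using this

lemma hasWalk_mul {A : Type*} {E : A → A → Prop} {a : A} {n : ℕ}
    (h : HasWalk E a a n) : ∀ c : ℕ, HasWalk E a a (c * n)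
  | 0 => by simpa using hasWalk_refl E a
  | (c + 1) => by
      have := hasWalk_trans (hasWalk_mul h c) h
      have e : (c + 1) * n = c * n + n := by ring
      rwa [e]

/-- In a finite strongly connected digraph of algebraic length 1, there is `K` such that any
two vertices are joined by walks of every length `k ≥ K`. -/
theorem large_enough_walks {A : Type*} [Fintype A] (E : A → A → Prop)
    (hsc : StronglyConnected E) (hal : AlgLengthOne E) :
    ∃ K : ℕ, ∀ v₀ v₁ : A, ∀ k ≥ K, HasWalk E v₀ v₁ k := by
  by_cases hA : IsEmpty A
  · exact ⟨0, fun v₀ => (hA.false v₀).elim⟩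
  have : Nonempty A := not_isEmpty_iff.mp hA
  obtain ⟨a⟩ := this
  -- chosen walk lengths
  set R : A → ℕ := fun v => (hsc a v).choose with hR
  set L : A → ℕ := fun v => (hsc v a).choose with hL
  have hRw : ∀ v, HasWalk E a v (R v) := fun v => (hsc a v).choose_spec
  have hLw : ∀ v, HasWalk E v a (L v) := fun v => (hsc v a).choose_spec
  -- Lemma A: no m ≥ 2 divides all closed walk lengths at a
  have lemA : ∀ m : ℕ, 2 ≤ m → ∃ n, HasWalk E a a n ∧ ¬ (m ∣ n) := by
    intro m hm
    by_contra hcon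
    push_neg at hcon
    have hdvd : ∀ n, HasWalk E a a n → m ∣ n := by
      intro n hn
      by_contra hd
      exact hd (hcon n hn)
    haveI : NeZero m := ⟨by omega⟩
    apply hal m hm
    refine ⟨fun v => (R v : ZMod m), ?_⟩
    intro u v huv
    have wuv : HasWalk E u v 1 :=
      ⟨fun i => if i = 0 then u else v, by simp, by simp, by
        intro i hi
        have : i = 0 := by omega
        subst this
        simpa using huv⟩
    have c1 : HasWalk E a a (R u + 1 + L v) :=
      hasWalk_trans (hasWalk_trans (hRw u) wuv) (hLw v)
    have c2 : HasWalk E a a (R v + L v) := hasWalk_trans (hRw v) (hLw v)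
    have d1 : m ∣ (R u + 1 + L v) := hdvd _ c1
    have d2 : m ∣ (R v + L v) := hdvd _ c2
    have e1 : ((R u : ZMod m) + 1) + (L v : ZMod m) = 0 := by
      have := (ZMod.natCast_eq_zero_iff (R u + 1 + L v) m).mpr d1
      push_cast at this
      linear_combination this
    have e2 : (R v : ZMod m) + (L v : ZMod m) = 0 := by
      have := (ZMod.natCast_eq_zero_iff (R v + L v) m).mpr d2
      push_cast at this
      linear_combination this
    have : (R v : ZMod m) = (R u : ZMod m) + 1 := by
      linear_combination e2 - e1
    simpa using this
  -- subgroup of differences of closed walk lengths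
  set T : AddSubgroup ℤ :=
    { carrier := {z | ∃ s t : ℕ, HasWalk E a a s ∧ HasWalk E a a t ∧ z = (s : ℤ) - t}
      zero_mem' := ⟨0, 0, hasWalk_refl E a, hasWalk_refl E a, by simp⟩
      add_mem' := by
        rintro x y ⟨s1, t1, hs1, ht1, rfl⟩ ⟨s2, t2, hs2, ht2, rfl⟩
        exact ⟨s1 + s2, t1 + t2, hasWalk_trans hs1 hs2, hasWalk_trans ht1 ht2, by push_cast; ring⟩
      neg_mem' := by
        rintro x ⟨s, t, hs, ht, rfl⟩
        exact ⟨t, s, ht, hs, by ring⟩ } with hT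
  obtain ⟨g, hg⟩ := Int.subgroup_cyclic T
  have hmemT : ∀ z : ℤ, z ∈ T ↔ g ∣ z := by
    intro z
    rw [hg, AddSubgroup.mem_closure_singleton]
    constructor
    · rintro ⟨n, rfl⟩; exact ⟨n, by rw [smul_eq_mul, mul_comm]⟩
    · rintro ⟨n, rfl⟩; exact ⟨n, by rw [smul_eq_mul, mul_comm]⟩
  have hST : ∀ n, HasWalk E a a n → ((n : ℤ) ∈ T) := by
    intro n hn
    exact ⟨n, 0, hn, hasWalk_refl E a, by simp⟩
  -- g.natAbs = 1
  have hg1 : g.natAbs = 1 := by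
    by_contra hne
    by_cases hg0 : g = 0
    · obtain ⟨n, hn, hnd⟩ := lemA 2 le_rfl
      have := (hmemT n).mp (hST n hn)
      rw [hg0] at this
      have : (n : ℤ) = 0 := zero_dvd_iff.mp this
      exact hnd (by simp_all)
    · have h2 : 2 ≤ g.natAbs := by
        rcases Nat.lt_or_ge g.natAbs 2 with h | h
        · interval_cases h' : g.natAbs <;> simp_all [Int.natAbs_eq_zero]
        · exact h
      obtain ⟨n, hn, hnd⟩ := lemA g.natAbs h2
      apply hnd
      have := (hmemT n).mp (hST n hn)
      have : g.natAbs ∣ n := by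
        have h' : (g.natAbs : ℤ) ∣ (n : ℤ) := (Int.natAbs_dvd).mpr this
        exact_mod_cast h'
      exact this
  -- obtain t with t, t+1 both closed walk lengths
  have h1T : (1 : ℤ) ∈ T := by
    refine (hmemT 1).mpr (isUnit_iff_dvd_one.mp (Int.isUnit_iff.mpr ?_))
    have := Int.natAbs_eq_iff.mp hg1
    simpa using this
  obtain ⟨s, t, hs, ht, hst⟩ := h1T
  have hst' : s = t + 1 := by omega
  subst hst'
  -- all lengths ≥ t*t are closed walk lengths at a
  have key : ∀ k, t * t ≤ k → HasWalk E a a k := by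
    intro k hk
    by_cases ht0 : t = 0
    · subst ht0
      have := hasWalk_mul hs k
      simpa using this
    · have htpos : 0 < t := by omega
      have hrt : k % t < t := Nat.mod_lt _ htpos
      have hqt : t ≤ k / t := (Nat.le_div_iff_mul_le htpos).mpr hk
      have hle : k % t ≤ k / t := le_trans (le_of_lt hrt) hqt
      obtain ⟨d, hd⟩ := Nat.exists_eq_add_of_le hle
      have hdec : k = (k % t) * (t + 1) + d * t := by
        have h0 : t * (k / t) + k % t = k := Nat.div_add_mod k t
        rw [hd] at h0
        ring_nf at h0 ⊢
        linarith
      rw [hdec]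
      exact hasWalk_trans (hasWalk_mul hs (k % t)) (hasWalk_mul ht d)
  -- assemble
  classical
  set B : ℕ := Finset.univ.sup (fun p : A × A => L p.1 + R p.2) with hB
  refine ⟨t * t + B, ?_⟩
  intro v₀ v₁ k hk
  have hBle : L v₀ + R v₁ ≤ B := by
    have : (v₀, v₁) ∈ (Finset.univ : Finset (A × A)) := Finset.mem_univ _
    exact Finset.le_sup (f := fun p : A × A => L p.1 + R p.2) this
  set mid := k - L v₀ - R v₁ with hmid
  have hmid' : t * t ≤ mid := by omega
  have hw : HasWalk E v₀ v₁ (L v₀ + mid + R v₁) :=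
    hasWalk_trans (hasWalk_trans (hLw v₀) (key mid hmid')) (hRw v₁)
  have : L v₀ + mid + R v₁ = k := by omega
  rwa [this] at hw
end

section
/- Let t be an idempotent n-ary operation on a set A compatible with a digraph G on A, and let H be a strongly connected component of G with algebraic length 1. Then the vertex set of H is closed under t: for any v₀,…,v_{n−1} in H, t(v₀,…,v_{n−1}) lies in H. -/
namespace HasWalk

variable {A : Type*} {E : A → A → Prop} {u v x : A} {k l : ℕ}

theorem refl (E : A → A → Prop) (u : A) : HasWalk E u u 0 :=
  ⟨fun _ => u, rfl, rfl, fun _ hi => absurd hi (Nat.not_lt_zero _)⟩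

theorem single (h : E u v) : HasWalk E u v 1 :=
  ⟨fun j => if j = 0 then u else v, rfl, rfl, fun i hi => by
    obtain rfl : i = 0 := by omega
    exact h⟩

theorem trans (h₁ : HasWalk E u v k) (h₂ : HasWalk E v x l) : HasWalk E u x (k + l) := by
  obtain ⟨w₁, hw₁0, hw₁k, hw₁⟩ := h₁
  obtain ⟨w₂, hw₂0, hw₂l, hw₂⟩ := h₂
  refine ⟨fun j => if j ≤ k then w₁ j else w₂ (j - k), by simp [hw₁0], ?_, fun i hi => ?_⟩
  · rcases Nat.eq_zero_or_pos l with rfl | hl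
    · simp [hw₁k, ← hw₂l, hw₂0]
    · simpa [show ¬k + l ≤ k by omega] using hw₂l
  · rcases lt_trichotomy i k with hik | rfl | hik
    · simpa [hik.le, Nat.succ_le_of_lt hik] using hw₁ i hik
    · simpa [hw₁k, ← hw₂0] using hw₂ 0 (by omega)
    · simpa [show ¬i ≤ k by omega, show ¬i + 1 ≤ k by omega, Nat.sub_add_comm hik.le]
        using hw₂ (i - k) (by omega)

theorem map_of_compatible {ι : Type*} {t : (ι → A) → A}
    (hcomp : ∀ u v : ι → A, (∀ i, E (u i) (v i)) → E (t u) (t v)) {u v : ι → A}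
    (h : ∀ i, HasWalk E (u i) (v i) k) : HasWalk E (t u) (t v) k := by
  choose w hw0 hwk hw using h
  refine ⟨fun j => t fun i => w i j, ?_, ?_, fun j hj => hcomp _ _ fun i => hw i j hj⟩
  · simp only [hw0]
  · simp only [hwk]

end HasWalk

section ClosedWalks

variable {A : Type*} {E : A → A → Prop} {a : A}

def closedWalkLengths (E : A → A → Prop) (a : A) : AddSubmonoid ℕ where
  carrier := {k | HasWalk E a a k}
  add_mem' := HasWalk.trans
  zero_mem' := HasWalk.refl E a

theorem AddSubmonoid.nat_exists_forall_ge_mem (S : AddSubmonoid ℕ)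
    (h : ∀ m ≥ 2, ∃ k ∈ S, ¬m ∣ k) : ∃ N, ∀ k ≥ N, k ∈ S := by
  have hgcd : Nat.setGcd S = 1 := by
    by_contra hne
    rcases Nat.lt_or_ge (Nat.setGcd S) 2 with hlt | hge
    · obtain ⟨k, hk, hndvd⟩ := h 2 le_rfl
      have hk0 : k = 0 := Nat.setGcd_eq_zero_iff.mp (by omega) hk
      exact hndvd (hk0 ▸ dvd_zero 2)
    · obtain ⟨k, hk, hndvd⟩ := h _ hge
      exact hndvd (Nat.setGcd_dvd_of_mem hk)
  obtain ⟨N, hN⟩ := Nat.exists_mem_closure_of_ge (S : Set ℕ)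
  exact ⟨N, fun k hk => by simpa using hN k hk (hgcd ▸ one_dvd k)⟩

theorem exists_potential_of_forall_dvd {H : Set A} {m : ℕ}
    (hconn : ∀ u ∈ H, ∀ v ∈ H, ∃ k, HasWalk E u v k) (ha : a ∈ H)
    (hdvd : ∀ k ∈ closedWalkLengths E a, m ∣ k) :
    ∃ f : A → ZMod m, ∀ u v : A, u ∈ H → v ∈ H → E u v → f v = f u + 1 := by
  classical
  choose len hlen using hconn a ha
  refine ⟨fun u => if hu : u ∈ H then (len u hu : ZMod m) else 0, fun u w hu hw he => ?_⟩
  obtain ⟨l, hl⟩ := hconn w hw a ha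
  have hvia_u : ((len u hu + 1 + l : ℕ) : ZMod m) = 0 :=
    (ZMod.natCast_eq_zero_iff _ _).mpr <| hdvd _ (((hlen u hu).trans (.single he)).trans hl)
  have hvia_w : ((len w hw + l : ℕ) : ZMod m) = 0 :=
    (ZMod.natCast_eq_zero_iff _ _).mpr <| hdvd _ ((hlen w hw).trans hl)
  simp only [dif_pos hu, dif_pos hw]
  push_cast at hvia_u hvia_w
  linear_combination hvia_w - hvia_u

theorem exists_forall_ge_hasWalk_self {H : Set A}
    (hconn : ∀ u ∈ H, ∀ v ∈ H, ∃ k, HasWalk E u v k)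
    (halg : ∀ m : ℕ, 2 ≤ m →
      ¬ ∃ f : A → ZMod m, ∀ u v : A, u ∈ H → v ∈ H → E u v → f v = f u + 1)
    (ha : a ∈ H) : ∃ N, ∀ k ≥ N, HasWalk E a a k :=
  (closedWalkLengths E a).nat_exists_forall_ge_mem fun m hm => by
    by_contra! hdvd
    exact halg m hm (exists_potential_of_forall_dvd hconn ha hdvd)

variable {ι : Type*} [Finite ι] {N : ℕ}

theorem exists_hasWalk_from_of_forall_ge (hN : ∀ k ≥ N, HasWalk E a a k) {v : ι → A}
    (h : ∀ i, ∃ k, HasWalk E a (v i) k) : ∃ K, ∀ i, HasWalk E a (v i) K := by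
  choose k hk using h
  obtain ⟨B, hB⟩ := (Set.finite_range k).bddAbove
  refine ⟨N + B, fun i => ?_⟩
  have hki : k i ≤ B := hB (Set.mem_range_self i)
  simpa [Nat.sub_add_cancel (by omega : k i ≤ N + B)] using (hN (N + B - k i) (by omega)).trans (hk i)

theorem exists_hasWalk_to_of_forall_ge (hN : ∀ k ≥ N, HasWalk E a a k) {v : ι → A}
    (h : ∀ i, ∃ k, HasWalk E (v i) a k) : ∃ K, ∀ i, HasWalk E (v i) a K := by
  choose k hk using h
  obtain ⟨B, hB⟩ := (Set.finite_range k).bddAbove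
  refine ⟨N + B, fun i => ?_⟩
  have hki : k i ≤ B := hB (Set.mem_range_self i)
  simpa [Nat.add_sub_cancel' (by omega : k i ≤ N + B)] using (hk i).trans (hN (N + B - k i) (by omega))

end ClosedWalks

/-- If `t` is an idempotent `n`-ary operation compatible with a digraph `G = (A, E)`, and `H` is
a strongly connected component of `G` whose induced subgraph has algebraic length 1 (no
homomorphism onto a directed cycle of length `≥ 2`), then `H` is closed under `t`. -/
theorem component_closed_directed {A : Type*} {n : ℕ} (E : A → A → Prop)
    (t : (Fin n → A) → A)
    (hidem : ∀ a : A, t (fun _ => a) = a)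
    (hcomp : ∀ u v : Fin n → A, (∀ i, E (u i) (v i)) → E (t u) (t v))
    (H : Set A)
    (hne : H.Nonempty)
    (hconn : ∀ u ∈ H, ∀ v ∈ H, ∃ k, HasWalk E u v k)
    (hmax : ∀ v : A, (∃ u ∈ H, (∃ k, HasWalk E u v k) ∧ (∃ k, HasWalk E v u k)) → v ∈ H)
    (halg : ∀ m : ℕ, 2 ≤ m →
      ¬ ∃ f : A → ZMod m, ∀ u v : A, u ∈ H → v ∈ H → E u v → f v = f u + 1)
    (v : Fin n → A) (hv : ∀ i, v i ∈ H) :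
    t v ∈ H := by
  obtain ⟨a, ha⟩ := hne
  obtain ⟨N, hN⟩ := exists_forall_ge_hasWalk_self hconn halg ha
  obtain ⟨K₁, hK₁⟩ := exists_hasWalk_from_of_forall_ge hN fun i => hconn a ha (v i) (hv i)
  obtain ⟨K₂, hK₂⟩ := exists_hasWalk_to_of_forall_ge hN fun i => hconn (v i) (hv i) a ha
  have hto : HasWalk E a (t v) K₁ := hidem a ▸ HasWalk.map_of_compatible hcomp hK₁
  have hfrom : HasWalk E (t v) a K₂ := hidem a ▸ HasWalk.map_of_compatible hcomp hK₂
  exact hmax _ ⟨a, ha, ⟨K₁, hto⟩, ⟨K₂, hfrom⟩⟩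
end

section
/- Let H be a connected non-bipartite component of an undirected graph G on a set A that is compatible with an idempotent n-ary operation t. Then the vertex set of H is closed under t. -/
lemma walk_concat {A : Type*} {E : A → A → Prop} {u v x : A} {k l : ℕ}
    (h1 : HasWalk E u v k) (h2 : HasWalk E v x l) : HasWalk E u x (k + l) := by
  obtain ⟨w1, hw10, hw1k, hw1e⟩ := h1
  obtain ⟨w2, hw20, hw2l, hw2e⟩ := h2
  refine ⟨fun j => if j < k then w1 j else w2 (j - k), ?_, ?_, ?_⟩
  · by_cases h : 0 < k
    · simp [h, hw10]
    · have hk0 : k = 0 := by omega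
      subst hk0
      simp only [lt_irrefl, if_false, Nat.sub_zero, hw20]
      rw [← hw10, hw1k]
  · have : ¬ (k + l < k) := by omega
    simp [this, hw2l]
  · intro i hi
    by_cases h1' : i + 1 < k
    · have h0 : i < k := by omega
      simp only [h0, h1', if_true]
      exact hw1e i h0
    · by_cases h0 : i < k
      · have hik : i + 1 = k := by omega
        simp only [h0, h1', if_true, if_false]
        rw [hik, Nat.sub_self, hw20, ← hw1k, ← hik]
        exact hw1e i h0
      · simp only [h0, h1', if_false]
        have h2 : i - k < l := by omega
        have h3 : i + 1 - k = (i - k) + 1 := by omega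
        rw [h3]
        exact hw2e (i - k) h2

/-- If `H` is a connected non-bipartite component of an undirected graph `G = (A, E)` that is
compatible with an idempotent `n`-ary operation `t`, then `H` is closed under `t`. -/
theorem component_closed_undirected {A : Type*} {n : ℕ} (E : A → A → Prop)
    (hsymm : ∀ u v : A, E u v → E v u)
    (t : (Fin n → A) → A)
    (hidem : ∀ a : A, t (fun _ => a) = a)
    (hcomp : ∀ u v : Fin n → A, (∀ i, E (u i) (v i)) → E (t u) (t v))
    (H : Set A)
    (hne : H.Nonempty)
    (hconn : ∀ u ∈ H, ∀ v ∈ H, ∃ k, HasWalk E u v k)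
    (hmax : ∀ u ∈ H, ∀ v : A, E u v → v ∈ H)
    (hodd : ∃ u ∈ H, ∃ k, Odd k ∧ HasWalk E u u k)
    (v : Fin n → A) (hv : ∀ i, v i ∈ H) :
    t v ∈ H := by
  obtain ⟨u0, hu0, m, hmodd, hcyc⟩ := hodd
  have hm1 : 1 ≤ m := hmodd.pos
  -- u0 has a neighbor
  obtain ⟨wc, hwc0, hwcm, hwce⟩ := id hcyc
  have hnb : E u0 (wc 1) := hwc0 ▸ hwce 0 hm1
  -- a closed walk of length 2 at u0
  have h2 : HasWalk E u0 u0 2 := by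
    refine ⟨fun j => if j = 1 then wc 1 else u0, by simp, by simp, ?_⟩
    intro i hi
    interval_cases i
    · simpa using hnb
    · simpa using hsymm _ _ hnb
  have hstep : ∀ {x : A} {k : ℕ}, HasWalk E u0 x k → HasWalk E u0 x (k + 2) := by
    intro x k h
    have := walk_concat h2 h
    rwa [Nat.add_comm] at this
  have hsteps : ∀ {x : A} {k : ℕ}, HasWalk E u0 x k → ∀ j, HasWalk E u0 x (k + 2 * j) := by
    intro x k h j
    induction j with
    | zero => simpa using h
    | succ j ih =>
        have := hstep ih
        have he : k + 2 * j + 2 = k + 2 * (j + 1) := by ring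
        rwa [he] at this
  have hwalks : ∀ i, ∃ k, HasWalk E u0 (v i) k := fun i => hconn u0 hu0 (v i) (hv i)
  choose k hk using hwalks
  set K := m + ∑ i, k i with hK
  have hKi : ∀ i, k i ≤ ∑ i, k i := fun i =>
    Finset.single_le_sum (fun _ _ => Nat.zero_le _) (Finset.mem_univ i)
  have hKw : ∀ i, HasWalk E u0 (v i) K := by
    intro i
    by_cases hpar : (K - k i) % 2 = 0
    · obtain ⟨j, hj⟩ : ∃ j, K = k i + 2 * j := by
        refine ⟨(K - k i) / 2, ?_⟩
        have : k i ≤ K := le_trans (hKi i) (by omega)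
        omega
      rw [hj]; exact hsteps (hk i) j
    · have hmk : HasWalk E u0 (v i) (m + k i) := walk_concat hcyc (hk i)
      obtain ⟨j, hj⟩ : ∃ j, K = (m + k i) + 2 * j := by
        refine ⟨(K - (m + k i)) / 2, ?_⟩
        have h1 : m + k i ≤ K := by have := hKi i; omega
        have h2 : (K - (m + k i)) % 2 = 0 := by
          obtain ⟨c, hc⟩ := hmodd
          omega
        omega
      rw [hj]; exact hsteps hmk j
  simp only [HasWalk] at hKw
  choose W hW0 hWK hWe using hKw
  -- the combined walk
  set w : ℕ → A := fun j => t (fun i => W i j) with hw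
  have hw0 : w 0 = u0 := by
    have : (fun i => W i 0) = (fun _ : Fin n => u0) := funext fun i => hW0 i
    rw [hw]; simp only [this]; exact hidem u0
  have hwK : w K = t v := by
    rw [hw]; exact congrArg t (funext fun i => hWK i)
  have hwe : ∀ j < K, E (w j) (w (j + 1)) :=
    fun j hj => hcomp _ _ fun i => hWe i j hj
  have hmem : ∀ j, j ≤ K → w j ∈ H := by
    intro j
    induction j with
    | zero => intro _; rw [hw0]; exact hu0
    | succ j ih =>
        intro h
        exact hmax (w j) (ih (by omega)) _ (hwe j (by omega))
  have := hmem K le_rfl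
  rwa [hwK] at this
end

section
/- Let t: Aⁿ → A be an operation, G a digraph on A, and f: Σᴺ → A a substitution function (Σ = {0,…,n−1}) such that for every word x ∈ Σᴺ, either (1) there is i with f(x) = α_{i,i} and f(x[1:]+[j]) = α_{i,j} for all j, or (2) for every i there is a G-edge from f(x) to f(x[1:]+[i]). If t is idempotent, compatible with G, and for each i there is a G-edge α_{i,i} → t(α_{i,0},…,α_{i,n−1}), then G contains a loop. -/
/-- The `k`-th star power of an `n`-ary operation `t`: the `n^k`-ary operation obtained by
composing `t` in a full `n`-ary tree of depth `k`, arguments indexed by words in `(Fin n)^k`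
with the leftmost letter outermost. -/
def starPow {A : Type*} {n : ℕ} (t : (Fin n → A) → A) :
    (k : ℕ) → ((Fin k → Fin n) → A) → A
  | 0, f => f finZeroElim
  | k + 1, f => t fun i => starPow t k fun w => f (Fin.cons i w)

/-- `x[1:] + [j]`: remove the first letter of the word `x` and append the letter `j`. -/
def shiftIn {σ : Type*} {N : ℕ} (x : Fin N → σ) (j : σ) : Fin N → σ :=
  fun m => if h : (m : ℕ) + 1 < N then x ⟨(m : ℕ) + 1, h⟩ else j

/-- Iterated application of `t` along shifted words. -/
def fIter {A : Type*} {n N : ℕ} (t : (Fin n → A) → A) (f : (Fin N → Fin n) → A) :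
    ℕ → (Fin N → Fin n) → A
  | 0 => f
  | m + 1 => fun x => t fun i => fIter t f m (shiftIn x i)

/-- Proposition `f-exists` used as a hypothesis: if there is a substitution
`f : (Fin n)^N → A` such that for every word `x` either (1) `f x = α i i` and
`f (x[1:]+[j]) = α i j` for all `j`, or (2) there is an edge `f x → f (x[1:]+[i])` for
every `i`, and moreover `t` is idempotent, compatible with `G`, and there are edges
`α i i → t (α i 0, …, α i (n-1))`, then `G` has a loop. -/
theorem loop_from_substitution {A : Type*} {n N : ℕ} (t : (Fin n → A) → A)
    (E : A → A → Prop)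
    (α : Fin n → Fin n → A) (f : (Fin N → Fin n) → A)
    (hf : ∀ x : Fin N → Fin n,
      (∃ i : Fin n, f x = α i i ∧ ∀ j : Fin n, f (shiftIn x j) = α i j) ∨
      (∀ i : Fin n, E (f x) (f (shiftIn x i))))
    (hidem : ∀ a : A, t (fun _ => a) = a)
    (hcomp : ∀ u v : Fin n → A, (∀ i, E (u i) (v i)) → E (t u) (t v))
    (hα : ∀ i : Fin n, E (α i i) (t (α i))) :
    ∃ a : A, E a a := by
  rcases Nat.eq_zero_or_pos n with hn | hn
  · subst hn
    exact ⟨t Fin.elim0, hcomp _ _ (fun i => i.elim0)⟩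
  · have hE : ∀ m x, E (fIter t f m x) (fIter t f (m + 1) x) := by
      intro m
      induction m with
      | zero =>
        intro x
        rcases hf x with ⟨i, h1, h2⟩ | h
        · have ht : fIter t f 1 x = t (α i) := by
            show t _ = _
            congr 1
            funext j
            exact h2 j
          rw [ht]
          show E (f x) _
          rw [h1]
          exact hα i
        · have := hcomp (fun _ => f x) (fun i => f (shiftIn x i)) h
          rw [hidem] at this
          exact this
      | succ m ih =>
        intro x
        exact hcomp _ _ (fun i => ih (shiftIn x i))
    have hconst : ∀ m (x y : Fin N → Fin n), (∀ p : Fin N, m ≤ (p : ℕ) → x p = y p) →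
        fIter t f m x = fIter t f m y := by
      intro m
      induction m with
      | zero => intro x y h; show f x = f y; congr 1; funext p; exact h p (Nat.zero_le _)
      | succ m ih =>
        intro x y h
        show t _ = t _
        congr 1
        funext i
        apply ih
        intro p hp
        unfold shiftIn
        split
        · exact h _ (by simp; omega)
        · rfl
    set x : Fin N → Fin n := fun _ => ⟨0, hn⟩ with hx
    refine ⟨fIter t f N x, ?_⟩
    have h1 := hE N x
    have h2 : fIter t f (N + 1) x = fIter t f N x := by
      show t _ = _
      have he : (fun i => fIter t f N (shiftIn x i)) = fun _ => fIter t f N x := by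
        funext i
        apply hconst
        intro p hp
        exact absurd hp (by omega)
      rw [he, hidem]
    rwa [h2] at h1
end

section
/- Let t be an idempotent n-ary operation on a set A satisfying a Taylor system of equations locally on a two-element subset {x, y} ⊆ A (with the corresponding subalgebra/graph structure). Define the undirected graph E on the subalgebra generated by {x, y} where a₀ ~ a₁ iff there exists b with (a₀, a₁, b, b) in the subpower Q of A²×B² generated by all tuples (a₀,a₁,b₀,b₁) ∈ {x,y}⁴ with (a₀,a₁) ≠ (a₁,a₀) coordinate-differences as specified. Then for any tuples a, a′ ∈ {x,y}ⁿ differing in all coordinates except exactly one coordinate i (where aᵢ = a′ᵢ), there is an E-edge t(a₀,…,a_{n−1}) ~ t(a′₀,…,a′_{n−1}). -/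
/-- The subuniverse `Q` of `𝔸² × 𝔹²` generated by all quadruples `(a₀,a₁,b₀,b₁)` with
`a₀,a₁ ∈ {xA,yA}`, `b₀,b₁ ∈ {xB,yB}` and `a₀ ≠ a₁ ∨ b₀ ≠ b₁`: the smallest set containing
these generators and closed under the componentwise application of `tA, tA, tB, tB`. -/
def genQ {A B : Type*} {n : ℕ} (tA : (Fin n → A) → A) (tB : (Fin n → B) → B)
    (xA yA : A) (xB yB : B) : Set (A × A × B × B) :=
  ⋂₀ {S : Set (A × A × B × B) |
    (∀ a0 a1 b0 b1, (a0 = xA ∨ a0 = yA) → (a1 = xA ∨ a1 = yA) →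
      (b0 = xB ∨ b0 = yB) → (b1 = xB ∨ b1 = yB) →
      (a0 ≠ a1 ∨ b0 ≠ b1) → (a0, a1, b0, b1) ∈ S) ∧
    (∀ p : Fin n → A × A × B × B, (∀ j, p j ∈ S) →
      (tA (fun j => (p j).1), tA (fun j => (p j).2.1),
       tB (fun j => (p j).2.2.1), tB (fun j => (p j).2.2.2)) ∈ S)}

/-- Absorption claim of the double loop lemma: with `tA` idempotent and `tB` satisfying the
quasi-Taylor equations locally on `{xB, yB}` (with `xB ≠ yB`), for any tuples `a, a'` with
entries in `{xA, yA}` that agree exactly at the coordinate `i`, there is an edge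
`tA a ~ tA a'` in the graph `E = {(a₀,a₁) | ∃ b, (a₀,a₁,b,b) ∈ Q}`. -/
theorem double_loop_absorption_claim {A B : Type*} {n : ℕ}
    (tA : (Fin n → A) → A) (tB : (Fin n → B) → B)
    (xA yA : A) (xB yB : B)
    (hidem : ∀ a : A, tA (fun _ => a) = a)
    (hxyB : xB ≠ yB)
    (htaylor : ∀ i : Fin n, ∃ b b' : Fin n → B,
      (∀ j, b j = xB ∨ b j = yB) ∧ (∀ j, b' j = xB ∨ b' j = yB) ∧
      b i = xB ∧ b' i = yB ∧ tB b = tB b')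
    (a a' : Fin n → A) (i : Fin n)
    (ha : ∀ j, a j = xA ∨ a j = yA) (ha' : ∀ j, a' j = xA ∨ a' j = yA)
    (heq : a i = a' i) (hne : ∀ j, j ≠ i → a j ≠ a' j) :
    ∃ b : B, (tA a, tA a', b, b) ∈ genQ tA tB xA yA xB yB := by
  obtain ⟨b, b', hb, hb', hbi, hb'i, htb⟩ := htaylor i
  refine ⟨tB b, ?_⟩
  intro S hS
  obtain ⟨hgen, hcl⟩ := hS
  have key := hcl (fun j => (a j, a' j, b j, b' j)) ?_
  · have e1 : (fun j => a j) = a := rfl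
    have e2 : (fun j => a' j) = a' := rfl
    have e3 : (fun j => b j) = b := rfl
    have e4 : (fun j => b' j) = b' := rfl
    simpa [e1, e2, e3, e4, ← htb] using key
  · intro j
    by_cases hj : j = i
    · subst hj
      exact hgen _ _ _ _ (ha j) (ha' j) (hb j) (hb' j)
        (Or.inr (by rw [hbi, hb'i]; exact hxyB))
    · exact hgen _ _ _ _ (ha j) (ha' j) (hb j) (hb' j) (Or.inl (hne j hj))
end

section
/- Let x, y ∈ Σᴺ be words with y[0:N−1] = x[1:N], and let p ∈ [1:N−W+1] be a position. Define the priority π_x(p) of position p in x as π(x[p:p+W]) except when x[p:p+W] is constant, in which case π_x(p) = min(q−p, R−1) where q is the rightmost position with x[p:q+W] constant. Then: if p > L+1 and y[p−1:N] is constant, π_y(p−1) = π_x(p)+1 ∈ [0:R]; otherwise π_y(p−1) = π_x(p). (Here L, W, R, N = L+W+R are parameters with R ≥ 1 and π: Σᵂ → ℤ is a fixed function.) -/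
/-- The word `x` is constant on the index range `[a : b)`. -/
def ConstOn {σ : Type*} (x : ℕ → σ) (a b : ℕ) : Prop :=
  ∀ i j, a ≤ i → i < b → a ≤ j → j < b → x i = x j

open Classical in
/-- The priority `π_x(p)` of the position `p` in a word `x` of length `N`: it is
`π(x[p : p+W])` unless the window `x[p : p+W]` is constant, in which case it is
`min (q - p) (R - 1)` where `q` is the rightmost position (at most `N - W`) such that
`x[p : q+W]` is constant. -/
noncomputable def prio {σ : Type*} (N W R : ℕ) (π : (ℕ → σ) → ℤ) (x : ℕ → σ) (p : ℕ) : ℤ :=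
  if ConstOn x p (p + W) then
    min ((Nat.findGreatest (fun q => ConstOn x p (q + W)) (N - W) : ℤ) - (p : ℤ))
      ((R : ℤ) - 1)
  else π (fun i => x (p + i))

lemma ConstOn.mono {σ : Type*} {x : ℕ → σ} {a b b' : ℕ} (h : ConstOn x a b) (hb : b' ≤ b) :
    ConstOn x a b' := fun i j hi1 hi2 hj1 hj2 => h i j hi1 (lt_of_lt_of_le hi2 hb) hj1 (lt_of_lt_of_le hj2 hb)

/-- Priority shift lemma: let `x, y` be words of length `N = L + W + R` with
`y[0 : N-1] = x[1 : N]`, and let `p ∈ [1 : N-W+1]`. If `p > L + 1` and `y[p-1 : N]` is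
constant, then `π_y(p-1) = π_x(p) + 1 ∈ [0 : R]`; otherwise `π_y(p-1) = π_x(p)`. -/
theorem priority_shift {σ : Type*} [Fintype σ] (W R L N : ℕ)
    (hW : 1 ≤ W) (hR : 1 ≤ R) (hN : N = L + W + R)
    (π : (ℕ → σ) → ℤ)
    (hπW : ∀ w w' : ℕ → σ, (∀ i < W, w i = w' i) → π w = π w')
    (hπconst : ∀ w : ℕ → σ, (∀ i j, i < W → j < W → w i = w j) → π w = 0)
    (x y : ℕ → σ) (hxy : ∀ m, m + 1 < N → y m = x (m + 1))
    (p : ℕ) (hp1 : 1 ≤ p) (hp2 : p ≤ N - W) :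
    (L + 1 < p ∧ ConstOn y (p - 1) N →
      prio N W R π y (p - 1) = prio N W R π x p + 1 ∧
      prio N W R π y (p - 1) ∈ Set.Ico (0 : ℤ) (R : ℤ)) ∧
    (¬(L + 1 < p ∧ ConstOn y (p - 1) N) →
      prio N W R π y (p - 1) = prio N W R π x p) := by
  classical
  have hNW : N - W = L + R := by omega
  have hpN : p + W ≤ N := by omega
  -- shift equivalence
  have shiftIff : ∀ b, b ≤ N - 1 → (ConstOn y (p - 1) b ↔ ConstOn x p (b + 1)) := by
    intro b hb
    constructor
    · intro h i j hi1 hi2 hj1 hj2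
      have hi : 1 ≤ i := le_trans hp1 hi1
      have hj : 1 ≤ j := le_trans hp1 hj1
      have exi : y (i - 1) = x i := by
        have := hxy (i - 1) (by omega)
        rwa [Nat.sub_add_cancel hi] at this
      have exj : y (j - 1) = x j := by
        have := hxy (j - 1) (by omega)
        rwa [Nat.sub_add_cancel hj] at this
      rw [← exi, ← exj]
      exact h (i - 1) (j - 1) (by omega) (by omega) (by omega) (by omega)
    · intro h i j hi1 hi2 hj1 hj2
      have exi : y i = x (i + 1) := hxy i (by omega)
      have exj : y j = x (j + 1) := hxy j (by omega)
      rw [exi, exj]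
      exact h (i + 1) (j + 1) (by omega) (by omega) (by omega) (by omega)
  have hwin : ConstOn y (p - 1) (p - 1 + W) ↔ ConstOn x p (p + W) := by
    have := shiftIff (p - 1 + W) (by omega)
    rwa [show p - 1 + W + 1 = p + W by omega] at this
  by_cases hw : ConstOn x p (p + W)
  · -- constant window case
    have hwy : ConstOn y (p - 1) (p - 1 + W) := hwin.mpr hw
    set Fx := Nat.findGreatest (fun q => ConstOn x p (q + W)) (N - W) with hFxdef
    set Fy := Nat.findGreatest (fun q => ConstOn y (p - 1) (q + W)) (N - W) with hFydef
    have hFx1 : p ≤ Fx := Nat.le_findGreatest hp2 hw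
    have hFx2 : Fx ≤ N - W := Nat.findGreatest_le _
    have hFy2 : Fy ≤ N - W := Nat.findGreatest_le _
    have hFyspec : ConstOn y (p - 1) (Fy + W) :=
      Nat.findGreatest_spec (P := fun q => ConstOn y (p - 1) (q + W)) (by omega : p - 1 ≤ N - W)
        hwy
    have hFxspec : ConstOn x p (Fx + W) :=
      Nat.findGreatest_spec (P := fun q => ConstOn x p (q + W)) hp2 hw
    have hprx : prio N W R π x p = min ((Fx : ℤ) - p) ((R : ℤ) - 1) := by
      rw [prio, if_pos hw]
    have hpry : prio N W R π y (p - 1) = min ((Fy : ℤ) - (p - 1 : ℕ)) ((R : ℤ) - 1) := by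
      rw [prio, if_pos hwy]
    by_cases hc : ConstOn y (p - 1) N
    · -- B1: whole tail constant in y
      have hcx : ConstOn x p N := by
        have := (shiftIff (N - 1) (le_refl _)).mp (hc.mono (by omega))
        rwa [show N - 1 + 1 = N by omega] at this
      have hFxtop : Fx = N - W := le_antisymm hFx2
        (Nat.le_findGreatest le_rfl (by rw [show N - W + W = N by omega]; exact hcx))
      have hFytop : Fy = N - W := le_antisymm hFy2
        (Nat.le_findGreatest le_rfl (by rw [show N - W + W = N by omega]; exact hc))
      rw [hFxtop] at hprx; rw [hFytop] at hpry
      have hcast : ((N - W : ℕ) : ℤ) = (L : ℤ) + R := by omega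
      have hcastp : ((p - 1 : ℕ) : ℤ) = (p : ℤ) - 1 := by omega
      rw [hcast] at hprx hpry; rw [hcastp] at hpry
      constructor
      · rintro ⟨hLp, -⟩
        have hpz : (L : ℤ) + 1 < p := by exact_mod_cast hLp
        have hpz2 : (p : ℤ) ≤ (L : ℤ) + R := by omega
        rw [hprx, hpry]
        rw [min_eq_left (by omega), min_eq_left (by omega)]
        refine ⟨by ring, Set.mem_Ico.mpr ⟨by omega, by omega⟩⟩
      · rintro hno
        have hpL : p ≤ L + 1 := by
          by_contra hcon
          exact hno ⟨by omega, hc⟩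
        have hpz : (p : ℤ) ≤ (L : ℤ) + 1 := by exact_mod_cast hpL
        rw [hprx, hpry, min_eq_right (by omega), min_eq_right (by omega)]
    · -- B2: tail not constant
      have hFyeq : Fy = Fx - 1 := by
        have h1 : Fx - 1 ≤ Fy := by
          apply Nat.le_findGreatest (by omega)
          have := (shiftIff (Fx - 1 + W) (by omega)).mpr
            (by rwa [show Fx - 1 + W + 1 = Fx + W by omega])
          exact this
        have h2 : Fy + 1 ≤ Fx := by
          have hFylt : Fy < N - W := by
            rcases lt_or_eq_of_le hFy2 with h | h
            · exact h
            · exfalso; apply hc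
              have := hFyspec; rw [h, show N - W + W = N by omega] at this; exact this
          apply Nat.le_findGreatest (by omega)
          have := (shiftIff (Fy + W) (by omega)).mp hFyspec
          rwa [show Fy + W + 1 = Fy + 1 + W by omega] at this
        omega
      constructor
      · rintro ⟨-, hcc⟩; exact absurd hcc hc
      · intro _
        rw [hprx, hpry, hFyeq]
        have : ((Fx - 1 : ℕ) : ℤ) = (Fx : ℤ) - 1 := by omega
        rw [this, show ((p - 1 : ℕ) : ℤ) = (p : ℤ) - 1 by omega]
        congr 1; ring
  · -- non-constant window
    have hwy : ¬ConstOn y (p - 1) (p - 1 + W) := fun h => hw (hwin.mp h)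
    have hnc : ¬ConstOn y (p - 1) N := fun h => hwy (h.mono (by omega))
    have heq : prio N W R π y (p - 1) = prio N W R π x p := by
      rw [prio, prio, if_neg hw, if_neg hwy]
      apply hπW
      intro i hi
      have := hxy (p - 1 + i) (by omega)
      rw [this]; congr 1; omega
    exact ⟨fun h => absurd h.2 hnc, fun _ => heq⟩
end

section
/- Let Σ = {0,…,n−1}, t an idempotent n-ary operation on A compatible with digraph G, and f: Σᴺ → G a function satisfying: for each x ∈ Σᴺ, either (case 1) ∃i with f(x) = α_{i,i} and f(x[1:]+[j]) = α_{i,j} for all j, or (case 2) for all i, f(x) → f(x[1:]+[i]) is a G-edge; and for each i there is a G-edge α_{i,i} → t(α_{i,0},…,α_{i,n−1}). Define f₀, f₁: Σ^{N+1} → G by f₀(x) = f(x[0:N]) and f₁(x) = f(x[1:N+1]). Then t^{*(N+1)}(f₀) = t^{*(N+1)}(f₁) and there is a G-edge from t^{*(N+1)}(f₀) to t^{*(N+1)}(f₁); hence G has a loop. -/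
lemma starPow_succ {A : Type*} {n : ℕ} (t : (Fin n → A) → A) (k : ℕ)
    (f : (Fin (k + 1) → Fin n) → A) :
    starPow t (k + 1) f = t fun i => starPow t k fun w => f (Fin.cons i w) := rfl

lemma starPow_succ_inner {A : Type*} {n : ℕ} (t : (Fin n → A) → A) :
    ∀ (k : ℕ) (f : (Fin (k + 1) → Fin n) → A),
      starPow t (k + 1) f = starPow t k fun w => t fun j => f (Fin.snoc w j) := by
  intro k
  induction k with
  | zero =>
    intro f
    show t _ = t _
    congr 1
    funext i
    show f _ = f _
    congr 1
    funext x
    have hx : x = 0 := Fin.eq_zero x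
    subst hx
    simp [Fin.snoc]
  | succ k ih =>
    intro f
    rw [starPow_succ, starPow_succ]
    congr 1
    funext i
    rw [ih]
    congr 1
    funext w
    congr 1
    funext j
    rw [Fin.cons_snoc_eq_snoc_cons]

lemma starPow_mono {A : Type*} {n : ℕ} (t : (Fin n → A) → A) (E : A → A → Prop)
    (hcomp : ∀ u v : Fin n → A, (∀ i, E (u i) (v i)) → E (t u) (t v)) :
    ∀ (k : ℕ) (u v : (Fin k → Fin n) → A),
      (∀ w, E (u w) (v w)) → E (starPow t k u) (starPow t k v) := by
  intro k
  induction k with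
  | zero => intro u v h; exact h _
  | succ k ih =>
    intro u v h
    exact hcomp _ _ fun i => ih _ _ fun w => h _

/-- Conclusion of the proof of the local loop lemma: given a substitution `f` satisfying the
dichotomy of Proposition `f-exists`, the substitutions `f₀(x) = f(x[0:N])` and
`f₁(x) = f(x[1:N+1])` into the `(N+1)`-st star power of `t` evaluate to the same element, and
there is a `G`-edge between the two evaluations; hence `G` has a loop. -/
theorem loop_construction {A : Type*} {n N : ℕ} (t : (Fin n → A) → A)
    (E : A → A → Prop)
    (α : Fin n → Fin n → A) (f : (Fin N → Fin n) → A)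
    (hf : ∀ x : Fin N → Fin n,
      (∃ i : Fin n, f x = α i i ∧ ∀ j : Fin n, f (shiftIn x j) = α i j) ∨
      (∀ i : Fin n, E (f x) (f (shiftIn x i))))
    (hidem : ∀ a : A, t (fun _ => a) = a)
    (hcomp : ∀ u v : Fin n → A, (∀ i, E (u i) (v i)) → E (t u) (t v))
    (hα : ∀ i : Fin n, E (α i i) (t (α i))) :
    starPow t (N + 1) (fun x : Fin (N + 1) → Fin n => f (fun i : Fin N => x i.castSucc))
      = starPow t (N + 1) (fun x : Fin (N + 1) → Fin n => f (fun i : Fin N => x i.succ)) ∧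
    E (starPow t (N + 1) (fun x : Fin (N + 1) → Fin n => f (fun i : Fin N => x i.castSucc)))
      (starPow t (N + 1) (fun x : Fin (N + 1) → Fin n => f (fun i : Fin N => x i.succ))) ∧
    ∃ a : A, E a a := by
  -- f₀ equals starPow t N f (inner peel + idempotency)
  have h0 : starPow t (N + 1)
      (fun x : Fin (N + 1) → Fin n => f (fun i : Fin N => x i.castSucc))
      = starPow t N f := by
    rw [starPow_succ_inner]
    congr 1
    funext w
    have : (fun j : Fin n => f fun i : Fin N => (Fin.snoc w j : Fin (N + 1) → Fin n) i.castSucc)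
        = fun _ => f w := by
      funext j
      congr 1
      funext i
      simp
    rw [this, hidem]
  -- f₁ equals starPow t N f (outer peel + idempotency)
  have h1 : starPow t (N + 1)
      (fun x : Fin (N + 1) → Fin n => f (fun i : Fin N => x i.succ))
      = starPow t N f := by
    rw [starPow_succ]
    have : (fun i : Fin n => starPow t N fun w => f fun m : Fin N => (Fin.cons i w : Fin (N + 1) → Fin n) m.succ)
        = fun _ => starPow t N f := by
      funext i
      congr 1
    rw [this, hidem]
  -- inner peel of f₁ produces shiftIn
  have hsnoc : ∀ (w : Fin N → Fin n) (j : Fin n),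
      (fun i : Fin N => (Fin.snoc w j : Fin (N + 1) → Fin n) i.succ) = shiftIn w j := by
    intro w j
    funext i
    simp only [Fin.snoc, shiftIn, Fin.val_succ]
    split <;> simp_all [Fin.castLT]
  have h1' : starPow t (N + 1)
      (fun x : Fin (N + 1) → Fin n => f (fun i : Fin N => x i.succ))
      = starPow t N fun w => t fun j => f (shiftIn w j) := by
    rw [starPow_succ_inner]
    simp only [hsnoc]
  have hedge : E (starPow t N f) (starPow t N fun w => t fun j => f (shiftIn w j)) := by
    apply starPow_mono t E hcomp
    intro w
    rcases hf w with ⟨i, hfx, hsh⟩ | h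
    · have : (fun j : Fin n => f (shiftIn w j)) = α i := funext fun j => hsh j
      rw [hfx, this]
      exact hα i
    · have := hcomp (fun _ => f w) (fun j => f (shiftIn w j)) h
      rwa [hidem] at this
  refine ⟨h0.trans h1.symm, ?_, starPow t N f, ?_⟩
  · rw [h0, h1']; exact hedge
  · have h2 := hedge
    rw [← h1', h1] at h2
    exact h2
end
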